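/- Let 1 < α ≤ 2, 0 ≤ β < α - 1, a < b, and q : [a,b] → ℝ continuous with ∫ₐᵇ max(q(t),0) dt ≤ Γ(α) · ((2α-2-β)/((b-a)(α-1)))^(α-1) · ((2α-2-β)/(α-1-β))^(α-1-β). Then there is no continuous function u : [a,b] → ℝ, not identically zero and positive on (a,b), satisfying u(t) = ∫ₐᵇ G(t,s) q(s) u(s) ds for all t ∈ [a,b]. -/

import Mathlib

/-!
The kernel is dominated by its diagonal, `G t s ≤ G s s` (subadditivity of `x ↦ x ^ (α - 1)`),
and weighted AM-GM applied to `s - a` and `b - s` gives `C · G s s ≤ 1` for the constant `C` of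
the hypothesis, with equality only at `s = a + (α - 1)(b - a) / (2α - 2 - β)`. Evaluating the
integral equation at a maximum point `t₀` of the nonnegative solution `u` gives
`C · u t₀ < u t₀ · ∫ q⁺`: strictly, because `q⁺` is positive at some point other than that
maximiser (if `q⁺ ≡ 0` the equation gives `u t₀ ≤ 0` instead). So a nontrivial solution forces
the Lyapunov-type inequality `C < ∫ q⁺`.
-/

noncomputable def G (a b α β t s : ℝ) : ℝ :=
  if s ≤ t then
    (1 / Real.Gamma α) *
      ((t - a) ^ (α - 1) * (b - s) ^ (α - 1 - β) / (b - a) ^ (α - 1 - β) -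
        (t - s) ^ (α - 1))
  else
    (1 / Real.Gamma α) *
      ((t - a) ^ (α - 1) * (b - s) ^ (α - 1 - β) / (b - a) ^ (α - 1 - β))

open Real Set Topology

lemma rpow_mul_rpow_lt_one {x y p r : ℝ} (hx : 0 ≤ x) (hy : 0 ≤ y) (hp : 0 < p) (hr : 0 < r)
    (h : p * x + r * y = p + r) (hxy : x ≠ y) : x ^ p * y ^ r < 1 := by
  have hP : 0 < p + r := by positivity
  have hmean : x ^ (p / (p + r)) * y ^ (r / (p + r)) < 1 := by
    have hw : p / (p + r) + r / (p + r) = 1 := by field_simp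
    have hamgm := (geom_mean_lt_arith_mean2_weighted_iff_of_pos (by positivity) (by positivity)
      hx hy hw).2 hxy
    have hsum : p / (p + r) * x + r / (p + r) * y = 1 := by field_simp; linarith
    linarith
  calc x ^ p * y ^ r = (x ^ (p / (p + r)) * y ^ (r / (p + r))) ^ (p + r) := by
        rw [mul_rpow (by positivity) (by positivity), ← rpow_mul hx, ← rpow_mul hy]
        field_simp
    _ < 1 := rpow_lt_one (by positivity) hmean hP

lemma rpow_mul_rpow_le_one {x y p r : ℝ} (hx : 0 ≤ x) (hy : 0 ≤ y) (hp : 0 < p) (hr : 0 < r)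
    (h : p * x + r * y = p + r) : x ^ p * y ^ r ≤ 1 := by
  rcases ne_or_eq x y with hxy | rfl
  · exact (rpow_mul_rpow_lt_one hx hy hp hr h hxy).le
  · obtain rfl : x = 1 := by nlinarith
    simp

lemma ContinuousOn.nonneg_of_pos_on_Ioo {u : ℝ → ℝ} {a b : ℝ} (hab : a < b)
    (hu : ContinuousOn u (Icc a b)) (hpos : ∀ t ∈ Ioo a b, 0 < u t) :
    ∀ t ∈ Icc a b, 0 ≤ u t := by
  intro t ht
  have ht' : t ∈ closure (Ioo a b) := by rwa [closure_Ioo hab.ne]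
  exact ContinuousWithinAt.closure_le ht' continuousWithinAt_const
    ((hu t ht).mono Ioo_subset_Icc_self) fun s hs => (hpos s hs).le

lemma ContinuousOn.exists_ne_pos {f : ℝ → ℝ} {a b c s₀ : ℝ} (hf : ContinuousOn f (Icc a b))
    (hc : c ∈ Ioo a b) (hs₀ : s₀ ∈ Icc a b) (hfs₀ : 0 < f s₀) :
    ∃ s ∈ Icc a b, s ≠ c ∧ 0 < f s := by
  rcases ne_or_eq s₀ c with hne | rfl
  · exact ⟨s₀, hs₀, hne, hfs₀⟩
  have hIcc : Icc a b ∈ 𝓝 s₀ := Icc_mem_nhds hc.1 hc.2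
  have hev : ∀ᶠ s in 𝓝 s₀, s ∈ Icc a b ∧ 0 < f s :=
    Filter.Eventually.and hIcc ((hf.continuousAt hIcc).eventually (lt_mem_nhds hfs₀))
  have hne : ∀ᶠ s in 𝓝[≠] s₀, s ≠ s₀ := self_mem_nhdsWithin
  obtain ⟨s, ⟨hs, hfs⟩, hne⟩ := ((hev.filter_mono nhdsWithin_le_nhds).and hne).exists
  exact ⟨s, hs, hne, hfs⟩

lemma integral_mul_mul_lt {k f u : ℝ → ℝ} {a b M s₁ : ℝ} (hab : a < b)
    (hk : ContinuousOn k (Icc a b)) (hf : ContinuousOn f (Icc a b))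
    (hu : ContinuousOn u (Icc a b)) (hk0 : ∀ s ∈ Icc a b, 0 ≤ k s)
    (hk1 : ∀ s ∈ Icc a b, k s ≤ 1) (hf0 : ∀ s ∈ Icc a b, 0 ≤ f s)
    (huM : ∀ s ∈ Icc a b, u s ≤ M) (hM : 0 < M) (hs₁ : s₁ ∈ Icc a b) (hks₁ : k s₁ < 1)
    (hfs₁ : 0 < f s₁) :
    ∫ s in a..b, k s * (f s * u s) < M * ∫ s in a..b, f s := by
  have hle : ∀ s ∈ Icc a b, k s * (f s * u s) ≤ k s * (f s * M) := fun s hs =>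
    mul_le_mul_of_nonneg_left (mul_le_mul_of_nonneg_left (huM s hs) (hf0 s hs)) (hk0 s hs)
  rw [← intervalIntegral.integral_const_mul]
  refine intervalIntegral.integral_lt_integral_of_continuousOn_of_le_of_exists_lt hab
    (hk.mul (hf.mul hu)) (continuousOn_const.mul hf) (fun s hs => ?_) ⟨s₁, hs₁, ?_⟩
  · have hs := Ioc_subset_Icc_self hs
    calc k s * (f s * u s) ≤ k s * (f s * M) := hle s hs
      _ ≤ M * f s := by
        nlinarith [mul_nonneg (sub_nonneg.2 (hk1 s hs)) (mul_nonneg (hf0 s hs) hM.le)]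
  · calc k s₁ * (f s₁ * u s₁) ≤ k s₁ * (f s₁ * M) := hle s₁ hs₁
      _ < M * f s₁ := by nlinarith [mul_pos (sub_pos.2 hks₁) (mul_pos hfs₁ hM)]

noncomputable def lyapunovConst (a b α β : ℝ) : ℝ :=
  Gamma α * ((2 * α - 2 - β) / ((b - a) * (α - 1))) ^ (α - 1) *
    ((2 * α - 2 - β) / (α - 1 - β)) ^ (α - 1 - β)

noncomputable def GSelfArgmax (a b α β : ℝ) : ℝ :=
  a + (α - 1) * (b - a) / (2 * α - 2 - β)

section Green

variable {a b α β t s : ℝ}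

lemma continuous_G (hα : 1 < α) (hβα : β ≤ α - 1) : Continuous (G a b α β t) := by
  have hp : α - 1 ≠ 0 := by linarith
  unfold G
  refine Continuous.if_le (by fun_prop (disch := linarith)) (by fun_prop (disch := linarith))
    continuous_id continuous_const fun s hs => ?_
  simp [hs, zero_rpow hp]

lemma G_self (hα : 1 < α) :
    G a b α β s s =
      (1 / Gamma α) * ((s - a) ^ (α - 1) * (b - s) ^ (α - 1 - β) / (b - a) ^ (α - 1 - β)) := by
  simp [G, zero_rpow (show α - 1 ≠ 0 by linarith)]

lemma G_nonneg (hα : 1 < α) (hβ : 0 ≤ β) (hβα : β ≤ α - 1) (hab : a < b)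
    (ht : t ∈ Icc a b) (hs : s ∈ Icc a b) : 0 ≤ G a b α β t s := by
  obtain ⟨hat, htb⟩ := ht
  obtain ⟨has, hsb⟩ := hs
  have hΓ : 0 < Gamma α := Gamma_pos_of_pos (by linarith)
  have hta : 0 ≤ (t - a) ^ (α - 1) := rpow_nonneg (by linarith) _
  have hbs : 0 ≤ (b - s) ^ (α - 1 - β) := rpow_nonneg (by linarith) _
  unfold G
  split_ifs with hst
  · refine mul_nonneg (by positivity) (sub_nonneg.2 ?_)
    set θ := (b - s) / (b - a)
    have hθ0 : 0 ≤ θ := div_nonneg (by linarith) (by linarith)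
    have hθ1 : θ ≤ 1 := (div_le_one (by linarith)).2 (by linarith)
    -- `θ (t - a) - (t - s) = (s - a)(b - t) / (b - a)`
    have hts : t - s ≤ θ * (t - a) := by
      rw [div_mul_eq_mul_div, le_div_iff₀ (by linarith)]
      nlinarith
    calc (t - s) ^ (α - 1) ≤ (θ * (t - a)) ^ (α - 1) := rpow_le_rpow (by linarith) hts (by linarith)
      _ = θ ^ (α - 1) * (t - a) ^ (α - 1) := mul_rpow hθ0 (by linarith)
      _ ≤ θ ^ (α - 1 - β) * (t - a) ^ (α - 1) := mul_le_mul_of_nonneg_right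
        (rpow_le_rpow_of_exponent_ge' hθ0 hθ1 (by linarith) (by linarith)) hta
      _ = (t - a) ^ (α - 1) * (b - s) ^ (α - 1 - β) / (b - a) ^ (α - 1 - β) := by
        rw [div_rpow (by linarith) (by linarith)]
        ring
  · have : 0 < (b - a) ^ (α - 1 - β) := rpow_pos_of_pos (by linarith) _
    positivity

lemma G_le_G_self (hα : 1 < α) (hα2 : α ≤ 2) (hβα : β ≤ α - 1) (hab : a < b)
    (ht : t ∈ Icc a b) (hs : s ∈ Icc a b) : G a b α β t s ≤ G a b α β s s := by
  obtain ⟨hat, htb⟩ := ht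
  obtain ⟨has, hsb⟩ := hs
  have hΓ : 0 < Gamma α := Gamma_pos_of_pos (by linarith)
  have hL : 0 < (b - a) ^ (α - 1 - β) := rpow_pos_of_pos (by linarith) _
  have hbs : 0 ≤ (b - s) ^ (α - 1 - β) := rpow_nonneg (by linarith) _
  rw [G_self hα]
  unfold G
  split_ifs with hst
  · gcongr
    set θ := (b - s) ^ (α - 1 - β) / (b - a) ^ (α - 1 - β)
    have hθ1 : θ ≤ 1 :=
      (div_le_one hL).2 (rpow_le_rpow (by linarith) (by linarith) (by linarith))
    have hsub : (t - a) ^ (α - 1) ≤ (t - s) ^ (α - 1) + (s - a) ^ (α - 1) := by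
      simpa using rpow_add_le_add_rpow (show 0 ≤ t - s by linarith) (show 0 ≤ s - a by linarith)
        (show 0 ≤ α - 1 by linarith) (show α - 1 ≤ 1 by linarith)
    have hmono : (s - a) ^ (α - 1) ≤ (t - a) ^ (α - 1) :=
      rpow_le_rpow (by linarith) (by linarith) (by linarith)
    simp only [mul_div_assoc]
    nlinarith [div_nonneg hbs hL.le]
  · gcongr
    linarith

lemma lyapunovConst_pos (hα : 1 < α) (hβα : β < α - 1) (hab : a < b) :
    0 < lyapunovConst a b α β := by
  have hΓ : 0 < Gamma α := Gamma_pos_of_pos (by linarith)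
  have h₁ : 0 < (2 * α - 2 - β) / ((b - a) * (α - 1)) :=
    div_pos (by linarith) (mul_pos (by linarith) (by linarith))
  have h₂ : 0 < (2 * α - 2 - β) / (α - 1 - β) := div_pos (by linarith) (by linarith)
  unfold lyapunovConst
  positivity

lemma G_self_mul_lyapunovConst (hα : 1 < α) (hβα : β < α - 1) (hab : a < b)
    (hs : s ∈ Icc a b) :
    G a b α β s s * lyapunovConst a b α β =
      ((s - a) * ((2 * α - 2 - β) / ((b - a) * (α - 1)))) ^ (α - 1) *
        ((b - s) / (b - a) * ((2 * α - 2 - β) / (α - 1 - β))) ^ (α - 1 - β) := by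
  have hΓ : Gamma α ≠ 0 := (Gamma_pos_of_pos (by linarith)).ne'
  have h₁ : 0 ≤ (2 * α - 2 - β) / ((b - a) * (α - 1)) :=
    div_nonneg (by linarith) (mul_nonneg (by linarith) (by linarith))
  have h₂ : 0 ≤ (2 * α - 2 - β) / (α - 1 - β) := div_nonneg (by linarith) (by linarith)
  rw [G_self hα, lyapunovConst, mul_rpow (by linarith [hs.1]) h₁,
    mul_rpow (div_nonneg (by linarith [hs.2]) (by linarith)) h₂,
    div_rpow (x := b - s) (by linarith [hs.2]) (by linarith)]
  field_simp

lemma lyapunov_weighted_sum (hα : 1 < α) (hβα : β < α - 1) (hab : a < b) :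
    (α - 1) * ((s - a) * ((2 * α - 2 - β) / ((b - a) * (α - 1)))) +
      (α - 1 - β) * ((b - s) / (b - a) * ((2 * α - 2 - β) / (α - 1 - β))) =
      (α - 1) + (α - 1 - β) := by
  have hp : α - 1 ≠ 0 := by linarith
  have hr : α - 1 - β ≠ 0 := by linarith
  have hL : b - a ≠ 0 := by linarith
  field_simp
  ring

lemma G_mul_lyapunovConst_lt_one (hα : 1 < α) (hα2 : α ≤ 2) (hβα : β < α - 1) (hab : a < b)
    (ht : t ∈ Icc a b) (hs : s ∈ Icc a b) (hs' : s ≠ GSelfArgmax a b α β) :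
    G a b α β t s * lyapunovConst a b α β < 1 := by
  calc G a b α β t s * lyapunovConst a b α β ≤ G a b α β s s * lyapunovConst a b α β :=
        mul_le_mul_of_nonneg_right (G_le_G_self hα hα2 hβα.le hab ht hs)
          (lyapunovConst_pos hα hβα hab).le
    _ = _ := G_self_mul_lyapunovConst hα hβα hab hs
    _ < 1 := by
      refine rpow_mul_rpow_lt_one (mul_nonneg (by linarith [hs.1]) ?_) ?_ (by linarith)
        (by linarith) (lyapunov_weighted_sum hα hβα hab) fun h => hs' ?_
      · exact div_nonneg (by linarith) (mul_nonneg (by linarith) (by linarith))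
      · exact mul_nonneg (div_nonneg (by linarith [hs.2]) (by linarith))
          (div_nonneg (by linarith) (by linarith))
      · have hp : α - 1 ≠ 0 := by linarith
        have hr : α - 1 - β ≠ 0 := by linarith
        have hL : b - a ≠ 0 := by linarith
        have hP : 2 * α - 2 - β ≠ 0 := by linarith
        field_simp at h
        have key : (s - a) * (α - 1 - β) = (α - 1) * (b - s) := mul_left_cancel₀ hP (by linarith)
        rw [GSelfArgmax, ← sub_eq_iff_eq_add', eq_div_iff hP]
        linarith

lemma G_mul_lyapunovConst_le_one (hα : 1 < α) (hα2 : α ≤ 2) (hβα : β < α - 1) (hab : a < b)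
    (ht : t ∈ Icc a b) (hs : s ∈ Icc a b) :
    G a b α β t s * lyapunovConst a b α β ≤ 1 := by
  calc G a b α β t s * lyapunovConst a b α β ≤ G a b α β s s * lyapunovConst a b α β :=
        mul_le_mul_of_nonneg_right (G_le_G_self hα hα2 hβα.le hab ht hs)
          (lyapunovConst_pos hα hβα hab).le
    _ = _ := G_self_mul_lyapunovConst hα hβα hab hs
    _ ≤ 1 := by
      refine rpow_mul_rpow_le_one (mul_nonneg (by linarith [hs.1]) ?_) ?_ (by linarith)
        (by linarith) (lyapunov_weighted_sum hα hβα hab)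
      · exact div_nonneg (by linarith) (mul_nonneg (by linarith) (by linarith))
      · exact mul_nonneg (div_nonneg (by linarith [hs.2]) (by linarith))
          (div_nonneg (by linarith) (by linarith))

lemma GSelfArgmax_mem_Ioo (hα : 1 < α) (hβα : β < α - 1) (hab : a < b) :
    GSelfArgmax a b α β ∈ Ioo a b := by
  have hP : 0 < 2 * α - 2 - β := by linarith
  have h₀ : 0 < (α - 1) * (b - a) / (2 * α - 2 - β) :=
    div_pos (mul_pos (by linarith) (by linarith)) hP
  have h₁ : (α - 1) * (b - a) / (2 * α - 2 - β) < b - a := by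
    rw [div_lt_iff₀ hP]
    nlinarith
  constructor <;> unfold GSelfArgmax <;> linarith

end Green

theorem lyapunovConst_lt_integral_posPart {α β a b : ℝ} (hα : 1 < α) (hα2 : α ≤ 2)
    (hβ : 0 ≤ β) (hβα : β < α - 1) (hab : a < b) {q u : ℝ → ℝ}
    (hq : ContinuousOn q (Icc a b)) (hu : ContinuousOn u (Icc a b))
    (hu₀ : ∃ t ∈ Icc a b, u t ≠ 0) (hu_nonneg : ∀ t ∈ Icc a b, 0 ≤ u t)
    (hsol : ∀ t ∈ Icc a b, u t = ∫ s in a..b, G a b α β t s * (q s * u s)) :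
    lyapunovConst a b α β < ∫ s in a..b, max (q s) 0 := by
  set C := lyapunovConst a b α β
  have hC : 0 < C := lyapunovConst_pos hα hβα hab
  obtain ⟨t₀, ht₀, hmax⟩ := isCompact_Icc.exists_isMaxOn (nonempty_Icc.2 hab.le) hu
  obtain ⟨t₁, ht₁, hut₁⟩ := hu₀
  have hM : 0 < u t₀ := ((hu_nonneg t₁ ht₁).lt_of_ne' hut₁).trans_le (hmax ht₁)
  have hqp : ContinuousOn (fun s => max (q s) 0) (Icc a b) := hq.sup continuousOn_const
  have hG : ContinuousOn (G a b α β t₀) (Icc a b) := (continuous_G hα hβα.le).continuousOn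
  have hk : ContinuousOn (fun s => G a b α β t₀ s * C) (Icc a b) := hG.mul continuousOn_const
  have hupper : C * u t₀ ≤ ∫ s in a..b, G a b α β t₀ s * C * (max (q s) 0 * u s) := by
    rw [hsol t₀ ht₀, ← intervalIntegral.integral_const_mul]
    refine intervalIntegral.integral_mono_on hab.le
      ((continuousOn_const.mul (hG.mul (hq.mul hu))).intervalIntegrable_of_Icc hab.le)
      ((hk.mul (hqp.mul hu)).intervalIntegrable_of_Icc hab.le) fun s hs => ?_
    have hqu : q s * u s ≤ max (q s) 0 * u s :=
      mul_le_mul_of_nonneg_right (le_max_left _ _) (hu_nonneg s hs)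
    nlinarith [mul_le_mul_of_nonneg_left hqu
      (mul_nonneg (G_nonneg hα hβ hβα.le hab ht₀ hs) hC.le)]
  by_cases hq_pos : ∃ s₀ ∈ Icc a b, 0 < max (q s₀) 0
  · obtain ⟨s₀, hs₀, hqs₀⟩ := hq_pos
    obtain ⟨s₁, hs₁, hs₁', hqs₁⟩ := hqp.exists_ne_pos (GSelfArgmax_mem_Ioo hα hβα hab) hs₀ hqs₀
    have hlt := integral_mul_mul_lt hab hk hqp hu
      (fun s hs => mul_nonneg (G_nonneg hα hβ hβα.le hab ht₀ hs) hC.le)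
      (fun s hs => G_mul_lyapunovConst_le_one hα hα2 hβα hab ht₀ hs)
      (fun s _ => le_max_right _ _) (fun s hs => hmax hs) hM hs₁
      (G_mul_lyapunovConst_lt_one hα hα2 hβα hab ht₀ hs₁ hs₁') hqs₁
    nlinarith
  · push Not at hq_pos
    have hzero : ∫ s in a..b, G a b α β t₀ s * C * (max (q s) 0 * u s) = 0 := by
      rw [intervalIntegral.integral_congr (g := fun _ => 0) fun s hs => ?_]
      · simp
      · rw [uIcc_of_le hab.le] at hs
        simp [le_antisymm (hq_pos s hs) (le_max_right _ _)]
    nlinarith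

theorem stmt_11 (α β a b : ℝ) (hα : 1 < α) (hα2 : α ≤ 2) (hβ : 0 ≤ β)
    (hβα : β < α - 1) (hab : a < b) (q : ℝ → ℝ)
    (hq : ContinuousOn q (Set.Icc a b))
    (hint : ∫ t in a..b, max (q t) 0 ≤
      Real.Gamma α * ((2 * α - 2 - β) / ((b - a) * (α - 1))) ^ (α - 1) *
        ((2 * α - 2 - β) / (α - 1 - β)) ^ (α - 1 - β)) :
    ¬ ∃ u : ℝ → ℝ, ContinuousOn u (Set.Icc a b) ∧
      (∃ t ∈ Set.Icc a b, u t ≠ 0) ∧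
      (∀ t ∈ Set.Ioo a b, 0 < u t) ∧
      ∀ t ∈ Set.Icc a b, u t = ∫ s in a..b, G a b α β t s * (q s * u s) := by
  rintro ⟨u, hu, hu₀, hu_pos, hsol⟩
  exact hint.not_gt <| lyapunovConst_lt_integral_posPart hα hα2 hβ hβα hab hq hu hu₀
    (hu.nonneg_of_pos_on_Ioo hab hu_pos) hsol
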